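/- Let d ∈ {2,3}, let Ω ⊂ ℝ^d be a bounded measurable set, T > 0, G an invertible real d×d matrix, and h : (0,T) → ℝ^d measurable. Then for every p ∈ (1,2) and every ε ∈ (0,1), ∫_Ω ( ∫_0^T |Gx − h(t)|^{−pd/2} dt )^{(2−ε)/p} dx < ∞; that is, the function f(x,t) = |Gx − h(t)|^{−d/2} belongs to L^{2−ε}(Ω; L^p((0,T))). Moreover, for every fixed t and every λ > 0, the distribution function satisfies |{x ∈ Ω : |Gx − h(t)|^{−pd/2} > λ}| ≤ ω_d ‖G⁻¹‖^d λ^{−2/p}, where ω_d is the Lebesgue measure of the unit ball in ℝ^d. -/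

import Mathlib

/-!
Let `B = G⁻¹`, so that `‖x - B c‖ ≤ ‖B‖ ‖G x - c‖`. Hence the superlevel set
`{x | λ < |G x - c|^{-α}}` lies in the closed ball of radius `‖B‖ λ^{-1/α}` around `B c`, which
gives the distribution bound.

For the mixed norm put `α = p d / 2`, `q = (2 - ε) / p` and `r = max q 1`. Then `a^q ≤ 1 + a^r`, and
Jensen's inequality in time, `(∫₀ᵀ f)^r ≤ T^{r-1} ∫₀ᵀ f^r`, reduces everything to the finiteness of
`∫_Ω ∫₀ᵀ |G x - h t|^{-αr}`, where `αr = max (2 - ε) p · d / 2 < d`. By Tonelli it suffices to bound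
`∫_Ω |G x - c|^{-αr} dx` uniformly in `c`. As `|G x - c|^{-αr} ≤ ‖B‖^{αr} |x - B c|^{-αr}`, this
follows from translation invariance, the integrability of `|y|^{-αr}` on the unit ball and the bound
`|y|^{-αr} ≤ 1` off it.
-/

open MeasureTheory Metric Set ENNReal Module

namespace ENNReal

theorem rpow_le_one_add_rpow (a : ℝ≥0∞) {q r : ℝ} (hq : 0 ≤ q) (hqr : q ≤ r) :
    a ^ q ≤ 1 + a ^ r := by
  rcases le_total a 1 with ha | ha
  · exact (rpow_le_one ha hq).trans le_self_add
  · exact (rpow_le_rpow_of_exponent_le ha hqr).trans le_add_self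

theorem le_rpow_neg_inv_of_ofReal_lt_ofReal_rpow_neg {s l α : ℝ} (hl : 0 < l) (hα : 0 < α)
    (h : ENNReal.ofReal l < ENNReal.ofReal s ^ (-α)) : s ≤ l ^ (-α)⁻¹ := by
  rcases le_or_gt s 0 with hs | hs
  · exact hs.trans (Real.rpow_nonneg hl.le _)
  rw [ofReal_rpow_of_pos hs, ofReal_lt_ofReal_iff (Real.rpow_pos_of_pos hs _)] at h
  exact (Real.le_rpow_inv_iff_of_neg hs hl (neg_lt_zero.mpr hα)).mpr h.le

theorem ofReal_rpow_neg_le_mul_ofReal_rpow_neg {s u N α : ℝ} (hN : 0 < N) (hα : 0 ≤ α)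
    (hu : u ≤ N * s) :
    ENNReal.ofReal s ^ (-α) ≤ ENNReal.ofReal (N ^ α) * ENNReal.ofReal u ^ (-α) := by
  have hus : ENNReal.ofReal u ≤ ENNReal.ofReal N * ENNReal.ofReal s := by
    rw [← ofReal_mul hN.le]
    exact ofReal_le_ofReal hu
  have hN' : ENNReal.ofReal N ≠ 0 := (ofReal_pos.mpr hN).ne'
  calc ENNReal.ofReal s ^ (-α)
      = ENNReal.ofReal (N ^ α) * (ENNReal.ofReal N * ENNReal.ofReal s) ^ (-α) := by
        rw [mul_rpow_of_ne_top ofReal_ne_top ofReal_ne_top, ← ofReal_rpow_of_pos hN, ← mul_assoc,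
          ← rpow_add _ _ hN' ofReal_ne_top, add_neg_cancel, rpow_zero, one_mul]
    _ ≤ ENNReal.ofReal (N ^ α) * ENNReal.ofReal u ^ (-α) := by
        rw [rpow_neg, rpow_neg]
        gcongr

theorem rpow_neg_le_indicator_ball_add_one {E : Type*} [SeminormedAddCommGroup E] {α : ℝ}
    (hα : 0 ≤ α) (v : E) :
    ENNReal.ofReal ‖v‖ ^ (-α) ≤
      (ball 0 1).indicator (fun w : E => ENNReal.ofReal ‖w‖ ^ (-α)) v + 1 := by
  by_cases hv : v ∈ ball (0 : E) 1
  · simp [indicator_of_mem hv]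
  · rw [indicator_of_notMem hv, zero_add]
    have hv1 : 1 ≤ ENNReal.ofReal ‖v‖ := one_le_ofReal.mpr (by simpa using hv)
    rw [rpow_neg, ENNReal.inv_le_one]
    simpa using rpow_le_rpow hv1 hα

end ENNReal

namespace MeasureTheory

theorem lintegral_rpow_le_measure_univ_rpow_mul {α : Type*} [MeasurableSpace α]
    {μ : Measure α} {f : α → ℝ≥0∞} (hf : AEMeasurable f μ) {r : ℝ} (hr : 1 ≤ r) :
    (∫⁻ a, f a ∂μ) ^ r ≤ μ univ ^ (r - 1) * ∫⁻ a, f a ^ r ∂μ := by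
  have h := eLpNorm'_le_eLpNorm'_mul_rpow_measure_univ one_pos hr hf.aestronglyMeasurable
  simp only [eLpNorm', enorm_eq_self, rpow_one, div_one] at h
  have hr0 : 0 ≤ r := zero_le_one.trans hr
  have hr' : r ≠ 0 := (zero_lt_one.trans_le hr).ne'
  calc (∫⁻ a, f a ∂μ) ^ r
      ≤ ((∫⁻ a, f a ^ r ∂μ) ^ (1 / r) * μ univ ^ (1 - 1 / r)) ^ r := rpow_le_rpow h hr0
    _ = μ univ ^ (r - 1) * ∫⁻ a, f a ^ r ∂μ := by
      rw [mul_rpow_of_nonneg _ _ hr0, ← rpow_mul, ← rpow_mul, one_div_mul_cancel hr', rpow_one,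
        sub_mul, one_div_mul_cancel hr', one_mul, mul_comm]

theorem lintegral_lintegral_comp_le_mul_measure_univ {α β γ : Type*}
    [MeasurableSpace α] [MeasurableSpace β] {μ : Measure α} {ν : Measure β} [SFinite μ] [SFinite ν]
    {F : α → γ → ℝ≥0∞} {g : β → γ}
    (hF : AEMeasurable (Function.uncurry fun x t => F x (g t)) (μ.prod ν)) {C : ℝ≥0∞}
    (hC : ∀ c, ∫⁻ x, F x c ∂μ ≤ C) :
    ∫⁻ x, ∫⁻ t, F x (g t) ∂ν ∂μ ≤ C * ν univ := by
  rw [lintegral_lintegral_swap hF]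
  calc ∫⁻ t, ∫⁻ x, F x (g t) ∂μ ∂ν ≤ ∫⁻ _, C ∂ν := lintegral_mono fun t => hC (g t)
    _ = C * ν univ := lintegral_const C

theorem setLIntegral_ofReal_norm_sub_rpow_neg_le {E : Type*} [NormedAddCommGroup E]
    [MeasurableSpace E] [BorelSpace E] (μ : Measure E) [μ.IsAddRightInvariant]
    (Ω : Set E) (b : E) {α : ℝ} (hα : 0 ≤ α) :
    ∫⁻ x in Ω, ENNReal.ofReal ‖x - b‖ ^ (-α) ∂μ ≤
      ∫⁻ v in ball (0 : E) 1, ENNReal.ofReal ‖v‖ ^ (-α) ∂μ + μ Ω := by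
  set g : E → ℝ≥0∞ := (ball 0 1).indicator fun v => ENNReal.ofReal ‖v‖ ^ (-α)
  calc ∫⁻ x in Ω, ENNReal.ofReal ‖x - b‖ ^ (-α) ∂μ
      ≤ ∫⁻ x in Ω, (g (x - b) + 1) ∂μ :=
        lintegral_mono fun x => rpow_neg_le_indicator_ball_add_one hα (x - b)
    _ = ∫⁻ x in Ω, g (x - b) ∂μ + μ Ω := by
        rw [lintegral_add_right _ measurable_const, setLIntegral_one]
    _ ≤ ∫⁻ x, g (x - b) ∂μ + μ Ω := by grw [setLIntegral_le_lintegral Ω]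
    _ = ∫⁻ v in ball (0 : E) 1, ENNReal.ofReal ‖v‖ ^ (-α) ∂μ + μ Ω := by
        rw [lintegral_sub_right_eq_self g b, lintegral_indicator measurableSet_ball]

end MeasureTheory

theorem Matrix.toEuclideanCLM_inv_apply_toEuclideanLin {𝕜 n : Type*} [RCLike 𝕜] [Fintype n]
    [DecidableEq n] {G : Matrix n n 𝕜} (hG : IsUnit G.det) (x : EuclideanSpace 𝕜 n) :
    Matrix.toEuclideanCLM (𝕜 := 𝕜) G⁻¹ (Matrix.toEuclideanLin G x) = x := by
  simp [Matrix.toLpLin_apply, Matrix.mulVec_mulVec, Matrix.nonsing_inv_mul G hG]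

section LeftInverse

variable {E F : Type*} [NormedAddCommGroup E] [NormedSpace ℝ E] [NormedAddCommGroup F]
  [NormedSpace ℝ F] {A : E → F} {B : F →L[ℝ] E}

theorem norm_sub_le_opNorm_mul_norm_sub_of_leftInverse (hBA : ∀ x, B (A x) = x) (x : E) (c : F) :
    ‖x - B c‖ ≤ ‖B‖ * ‖A x - c‖ := by
  simpa [map_sub, hBA] using B.le_opNorm (A x - c)

theorem setOf_ofReal_lt_rpow_neg_subset_closedBall (hBA : ∀ x, B (A x) = x) (c : F) {l α : ℝ}
    (hl : 0 < l) (hα : 0 < α) :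
    {x | ENNReal.ofReal l < ENNReal.ofReal ‖A x - c‖ ^ (-α)} ⊆
      closedBall (B c) (‖B‖ * l ^ (-α)⁻¹) := fun x hx => by
  rw [mem_closedBall, dist_eq_norm]
  exact (norm_sub_le_opNorm_mul_norm_sub_of_leftInverse hBA x c).trans
    (mul_le_mul_of_nonneg_left (le_rpow_neg_inv_of_ofReal_lt_ofReal_rpow_neg hl hα hx)
      (norm_nonneg B))

theorem setLIntegral_ofReal_norm_comp_sub_rpow_neg_le [Nontrivial E] [MeasurableSpace E]
    [BorelSpace E] (μ : Measure E) [μ.IsAddRightInvariant] (hBA : ∀ x, B (A x) = x)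
    (Ω : Set E) (c : F) {α : ℝ} (hα : 0 ≤ α) :
    ∫⁻ x in Ω, ENNReal.ofReal ‖A x - c‖ ^ (-α) ∂μ ≤
      ENNReal.ofReal (‖B‖ ^ α) * (∫⁻ v in ball (0 : E) 1, ENNReal.ofReal ‖v‖ ^ (-α) ∂μ + μ Ω) := by
  have hB : 0 < ‖B‖ := by
    obtain ⟨x, hx⟩ := exists_ne (0 : E)
    refine norm_pos_iff.mpr fun hB0 => hx ?_
    simpa [hB0] using (hBA x).symm
  calc ∫⁻ x in Ω, ENNReal.ofReal ‖A x - c‖ ^ (-α) ∂μ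
      ≤ ∫⁻ x in Ω, ENNReal.ofReal (‖B‖ ^ α) * ENNReal.ofReal ‖x - B c‖ ^ (-α) ∂μ :=
        lintegral_mono fun x => ofReal_rpow_neg_le_mul_ofReal_rpow_neg hB hα
          (norm_sub_le_opNorm_mul_norm_sub_of_leftInverse hBA x c)
    _ = ENNReal.ofReal (‖B‖ ^ α) * ∫⁻ x in Ω, ENNReal.ofReal ‖x - B c‖ ^ (-α) ∂μ :=
        lintegral_const_mul' _ _ ofReal_ne_top
    _ ≤ _ := by gcongr; exact setLIntegral_ofReal_norm_sub_rpow_neg_le μ Ω (B c) hα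

end LeftInverse

section AddHaar

variable {E F : Type*} [NormedAddCommGroup E] [NormedSpace ℝ E] [FiniteDimensional ℝ E]
  [MeasurableSpace E] [BorelSpace E] (μ : Measure E) [μ.IsAddHaarMeasure]
  [NormedAddCommGroup F] [NormedSpace ℝ F] {A : E → F} {B : F →L[ℝ] E}

theorem measure_setOf_ofReal_lt_rpow_neg_le (hBA : ∀ x, B (A x) = x) (c : F) {l α : ℝ}
    (hl : 0 < l) (hα : 0 < α) :
    μ {x | ENNReal.ofReal l < ENNReal.ofReal ‖A x - c‖ ^ (-α)} ≤
      ENNReal.ofReal ((‖B‖ * l ^ (-α)⁻¹) ^ finrank ℝ E) * μ (ball 0 1) := by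
  rw [← μ.addHaar_closedBall (B c) (by positivity)]
  exact measure_mono (setOf_ofReal_lt_rpow_neg_subset_closedBall hBA c hl hα)

theorem lintegral_ball_ofReal_norm_rpow_neg_lt_top {α : ℝ} (hα : 0 ≤ α)
    (hαd : α < finrank ℝ E) :
    ∫⁻ v in ball (0 : E) 1, ENNReal.ofReal ‖v‖ ^ (-α) ∂μ < ⊤ := by
  have hd : 1 ≤ finrank ℝ E := by exact_mod_cast hα.trans_lt hαd
  have : Nontrivial E := Module.nontrivial_of_finrank_pos (R := ℝ) hd
  have hint : IntegrableOn (fun v : E => ‖v‖ ^ (-α)) (ball 0 1) μ :=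
    integrableOn_ball_of_norm_le_rpow (C := 1) hd hαd
      (ae_of_all _ fun v => by simp [abs_of_nonneg (Real.rpow_nonneg (norm_nonneg v) _)])
      (measurable_norm.pow_const _).aestronglyMeasurable
  have hae : ∀ᵐ v ∂μ.restrict (ball 0 1),
      ENNReal.ofReal ‖v‖ ^ (-α) = ENNReal.ofReal (‖v‖ ^ (-α)) := by
    refine ae_restrict_of_ae ?_
    filter_upwards [compl_mem_ae_iff.mpr (measure_singleton (μ := μ) (0 : E))] with v hv
    exact ofReal_rpow_of_pos (norm_pos_iff.mpr hv)
  rw [lintegral_congr_ae hae]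
  exact hint.setLIntegral_lt_top

theorem setLIntegral_rpow_lintegral_ofReal_norm_sub_rpow_neg_lt_top [Nontrivial E]
    [MeasurableSpace F] [BorelSpace F] [SecondCountableTopology F]
    {β : Type*} [MeasurableSpace β] {ν : Measure β} [IsFiniteMeasure ν] {h : β → F}
    (hh : Measurable h) (hA : Continuous A) (hBA : ∀ x, B (A x) = x) {Ω : Set E} (hΩ : μ Ω ≠ ⊤)
    {α q r : ℝ} (hα : 0 ≤ α) (hq : 0 ≤ q) (hqr : q ≤ r) (hr : 1 ≤ r) (hαr : α * r < finrank ℝ E) :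
    ∫⁻ x in Ω, (∫⁻ t, ENNReal.ofReal ‖A x - h t‖ ^ (-α) ∂ν) ^ q ∂μ < ⊤ := by
  have hαr0 : 0 ≤ α * r := mul_nonneg hα (zero_le_one.trans hr)
  have hpointwise (x : E) : (∫⁻ t, ENNReal.ofReal ‖A x - h t‖ ^ (-α) ∂ν) ^ q ≤
      1 + ν univ ^ (r - 1) * ∫⁻ t, ENNReal.ofReal ‖A x - h t‖ ^ (-(α * r)) ∂ν := by
    refine (rpow_le_one_add_rpow _ hq hqr).trans (add_le_add_right ?_ 1)
    have hmeas : Measurable fun t => ENNReal.ofReal ‖A x - h t‖ ^ (-α) :=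
      ((measurable_const.sub hh).norm.ennreal_ofReal).pow_const _
    simpa only [← rpow_mul, neg_mul] using
      lintegral_rpow_le_measure_univ_rpow_mul hmeas.aemeasurable hr
  have hmeas : Measurable fun z : E × β => ENNReal.ofReal ‖A z.1 - h z.2‖ ^ (-(α * r)) :=
    ((hA.measurable.comp measurable_fst).sub
      (hh.comp measurable_snd)).norm.ennreal_ofReal.pow_const _
  have hνr : ν univ ^ (r - 1) ≠ ⊤ := rpow_ne_top_of_nonneg (by linarith) (measure_ne_top ν univ)
  calc ∫⁻ x in Ω, (∫⁻ t, ENNReal.ofReal ‖A x - h t‖ ^ (-α) ∂ν) ^ q ∂μ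
      ≤ ∫⁻ x in Ω, (1 + ν univ ^ (r - 1) * ∫⁻ t, ENNReal.ofReal ‖A x - h t‖ ^ (-(α * r)) ∂ν) ∂μ :=
        lintegral_mono hpointwise
    _ = μ Ω + ν univ ^ (r - 1) *
          ∫⁻ x in Ω, ∫⁻ t, ENNReal.ofReal ‖A x - h t‖ ^ (-(α * r)) ∂ν ∂μ := by
        rw [lintegral_add_left measurable_const, setLIntegral_one, lintegral_const_mul' _ _ hνr]
    _ ≤ μ Ω + ν univ ^ (r - 1) * (ENNReal.ofReal (‖B‖ ^ (α * r)) *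
          (∫⁻ v in ball (0 : E) 1, ENNReal.ofReal ‖v‖ ^ (-(α * r)) ∂μ + μ Ω) * ν univ) := by
        gcongr
        exact lintegral_lintegral_comp_le_mul_measure_univ hmeas.aemeasurable
          fun c => setLIntegral_ofReal_norm_comp_sub_rpow_neg_le μ hBA Ω c hαr0
    _ < ⊤ := by
        have := lintegral_ball_ofReal_norm_rpow_neg_lt_top μ hαr0 hαr
        finiteness

end AddHaar

theorem kernel_mixed_norm_and_distribution_bound_general
    (d : ℕ) (hd : d = 2 ∨ d = 3)
    (Ω : Set (EuclideanSpace ℝ (Fin d)))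
    (hΩb : Bornology.IsBounded Ω)
    (T : ℝ)
    (G : Matrix (Fin d) (Fin d) ℝ) (hG : IsUnit G.det)
    (h : ℝ → EuclideanSpace ℝ (Fin d)) (hh : Measurable h) :
    ∀ p : ℝ, 1 < p → p < 2 → ∀ ε : ℝ, 0 < ε → ε < 1 →
      ((∫⁻ x in Ω,
          (∫⁻ t in Set.Ioo (0 : ℝ) T,
            (ENNReal.ofReal ‖Matrix.toEuclideanLin G x - h t‖)
              ^ (-(p * d) / 2)) ^ ((2 - ε) / p)) < ⊤) ∧
      (∀ t : ℝ, t ∈ Set.Ioo (0 : ℝ) T → ∀ l : ℝ, 0 < l →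
        volume {x ∈ Ω |
            ENNReal.ofReal l <
              (ENNReal.ofReal ‖Matrix.toEuclideanLin G x - h t‖) ^ (-(p * d) / 2)}
          ≤ ENNReal.ofReal
              ((volume (Metric.ball (0 : EuclideanSpace ℝ (Fin d)) 1)).toReal *
                ‖Matrix.toEuclideanCLM (𝕜 := ℝ) G⁻¹‖ ^ (d : ℕ) * l ^ (-2 / p))) := by
  intro p hp1 hp2 ε hε0 hε1
  have hd0 : (0 : ℝ) < d := by rcases hd with rfl | rfl <;> norm_num
  have : NeZero d := ⟨by exact_mod_cast hd0.ne'⟩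
  have hBA := Matrix.toEuclideanCLM_inv_apply_toEuclideanLin hG
  have hα : 0 < p * d / 2 := by positivity
  simp only [neg_div]
  refine ⟨?_, fun t _ l hl => ?_⟩
  · have hαr : p * d / 2 * max ((2 - ε) / p) 1 < finrank ℝ (EuclideanSpace ℝ (Fin d)) := by
      rw [finrank_euclideanSpace_fin]
      rcases max_cases ((2 - ε) / p) 1 with ⟨hr, -⟩ | ⟨hr, -⟩ <;> rw [hr]
      · field_simp; nlinarith
      · nlinarith
    exact setLIntegral_rpow_lintegral_ofReal_norm_sub_rpow_neg_lt_top volume hh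
      (Matrix.toEuclideanLin G).continuous_of_finiteDimensional hBA hΩb.measure_lt_top.ne hα.le
      (div_nonneg (by linarith) (by linarith)) (le_max_left _ _) (le_max_right _ _) hαr
  · set B := Matrix.toEuclideanCLM (𝕜 := ℝ) G⁻¹
    have hradius : (‖B‖ * l ^ (-(p * d / 2))⁻¹) ^ d = ‖B‖ ^ d * l ^ (-(2 / p)) := by
      rw [mul_pow, ← Real.rpow_natCast (l ^ _), ← Real.rpow_mul hl.le]
      congr 2
      field_simp
    grw [sep_subset_ofPred, measure_setOf_ofReal_lt_rpow_neg_le volume hBA _ hl hα,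
      finrank_euclideanSpace_fin, hradius, mul_comm, mul_assoc, ENNReal.ofReal_mul toReal_nonneg,
      ofReal_toReal measure_ball_lt_top.ne]

/-- for `d ∈ {2,3}`, `Ω` bounded, `G` invertible and `h`
measurable, the function `f(x,t) = |Gx − h(t)|^{−d/2}` belongs to
`L^{2−ε}(Ω; L^p((0,T)))` for every `p ∈ (1,2)` and `ε ∈ (0,1)`; moreover, for
every fixed `t` and `λ > 0`, the distribution function satisfies
`|{x ∈ Ω : |Gx − h(t)|^{−pd/2} > λ}| ≤ ω_d ‖G⁻¹‖^d λ^{−2/p}`. -/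
theorem kernel_mixed_norm_and_distribution_bound
    (d : ℕ) (hd : d = 2 ∨ d = 3)
    (Ω : Set (EuclideanSpace ℝ (Fin d))) (hΩm : MeasurableSet Ω)
    (hΩb : Bornology.IsBounded Ω)
    (T : ℝ) (hT : 0 < T)
    (G : Matrix (Fin d) (Fin d) ℝ) (hG : IsUnit G.det)
    (h : ℝ → EuclideanSpace ℝ (Fin d)) (hh : Measurable h) :
    ∀ p : ℝ, 1 < p → p < 2 → ∀ ε : ℝ, 0 < ε → ε < 1 →
      ((∫⁻ x in Ω,
          (∫⁻ t in Set.Ioo (0 : ℝ) T,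
            (ENNReal.ofReal ‖Matrix.toEuclideanLin G x - h t‖)
              ^ (-(p * d) / 2)) ^ ((2 - ε) / p)) < ⊤) ∧
      (∀ t : ℝ, t ∈ Set.Ioo (0 : ℝ) T → ∀ l : ℝ, 0 < l →
        volume {x ∈ Ω |
            ENNReal.ofReal l <
              (ENNReal.ofReal ‖Matrix.toEuclideanLin G x - h t‖) ^ (-(p * d) / 2)}
          ≤ ENNReal.ofReal
              ((volume (Metric.ball (0 : EuclideanSpace ℝ (Fin d)) 1)).toReal *
                ‖Matrix.toEuclideanCLM (𝕜 := ℝ) G⁻¹‖ ^ (d : ℕ) * l ^ (-2 / p))) :=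
  kernel_mixed_norm_and_distribution_bound_general d hd Ω hΩb T G hG h hh
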